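/- Let n ≥ 4 and let T ∈ 𝒯_n be a phylogenetic tree such that Γ(T) ≥ Γ(T') for all T' ∈ 𝒯_n. Then T is a caterpillar. -/

import Mathlib

/-!
Formalization framework for unrooted binary phylogenetic trees on the
leaf set `Fin n`, encoded via their split systems (Buneman's
splits-equivalence theorem: a binary phylogenetic tree is uniquely
determined by its set of splits, which is a maximal pairwise-compatible
collection of proper bipartitions of the leaf set containing all
trivial splits).  A split `A | Aᶜ` is recorded by storing both of its
sides.
-/

/-- Two sides (subsets of leaves) are compatible: the corresponding
splits can coexist in a tree. -/
def SidesCompatible {n : ℕ} (A B : Finset (Fin n)) : Prop :=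
  A ⊆ B ∨ B ⊆ A ∨ Disjoint A B ∨ A ∪ B = Finset.univ

/-- An unrooted binary phylogenetic tree on leaf set `Fin n`,
represented by the set of sides of its splits. -/
structure PhyloTree (n : ℕ) where
  sides : Finset (Finset (Fin n))
  proper : ∀ A ∈ sides, A.Nonempty ∧ A ≠ Finset.univ
  compl_mem : ∀ A ∈ sides, Aᶜ ∈ sides
  singleton_mem : ∀ x : Fin n, {x} ∈ sides
  compatible : ∀ A ∈ sides, ∀ B ∈ sides, SidesCompatible A B
  maximal : ∀ A : Finset (Fin n), A.Nonempty → A ≠ Finset.univ →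
    (∀ B ∈ sides, SidesCompatible A B) → A ∈ sides

namespace PhyloTree

variable {n : ℕ}

/-- The split system of the restricted tree `T|X`: two trees agree on
`X` (i.e. `T|X = T'|X`) iff their restricted split systems agree. -/
def restrict (T : PhyloTree n) (X : Finset (Fin n)) : Finset (Finset (Fin n)) :=
  T.sides.image (· ∩ X)

/-- `Γ(T)`: the sum of `|A| * |B|` over all non-trivial splits `A|B` of
`T` (each unordered split is stored twice in `sides`, hence the
division by two, which is exact). -/
def gamma (T : PhyloTree n) : ℕ :=
  (∑ A ∈ T.sides.filter (fun A => 2 ≤ A.card ∧ 2 ≤ Aᶜ.card), A.card * Aᶜ.card) / 2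

/-- A tree-rearrangement move: the deleted edge of `T` (recorded as the
unordered split it induces) together with the output tree. -/
abbrev Move (n : ℕ) := Sym2 (Finset (Fin n)) × PhyloTree n

/-- The set of TBR operations on `T`: delete the edge inducing the
split `A | Aᶜ` and reconnect, obtaining a distinct tree `θ.2`.  The
defining property is that deleting the corresponding edges from `T`
and from `θ.2` yields the same forest, i.e. `A|Aᶜ` is a split of both
trees and the two restrictions agree. -/
def OTBR (T : PhyloTree n) : Set (Move n) :=
  { θ | θ.2 ≠ T ∧ ∃ A : Finset (Fin n),
      θ.1 = Sym2.mk A Aᶜ ∧ A ∈ T.sides ∧ A ∈ θ.2.sides ∧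
      T.restrict A = θ.2.restrict A ∧ T.restrict Aᶜ = θ.2.restrict Aᶜ }

/-- SPR operations: TBR operations where one component `T|A` of the
bisection (the pruned subtree) is regrafted preserving its rooting,
i.e. `T|(A ∪ {x}) = θ(T)|(A ∪ {x})` for some (equivalently every) leaf
`x` of the other side. -/
def OSPR (T : PhyloTree n) : Set (Move n) :=
  { θ | θ ∈ T.OTBR ∧ ∃ A : Finset (Fin n), θ.1 = Sym2.mk A Aᶜ ∧
      ∃ x ∈ Aᶜ, T.restrict (insert x A) = θ.2.restrict (insert x A) }

/-- The effect on sides of swapping the pendant subtrees `T|Y` and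
`T|Z` (for disjoint clusters `Y`, `Z`). -/
def swapSide (Y Z A : Finset (Fin n)) : Finset (Fin n) :=
  if Y ⊆ A ∧ Disjoint Z A then (A \ Y) ∪ Z
  else if Z ⊆ A ∧ Disjoint Y A then (A \ Z) ∪ Y
  else A

/-- NNI operations: SPR operations in which the pruned subtree `T|Y` is
swapped with a pendant subtree `T|Z` for some cluster `Z ≠ Y` of `T`. -/
def ONNI (T : PhyloTree n) : Set (Move n) :=
  { θ | θ ∈ T.OTBR ∧ ∃ Y Z : Finset (Fin n),
      θ.1 = Sym2.mk Y Yᶜ ∧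
      (∃ x ∈ Yᶜ, T.restrict (insert x Y) = θ.2.restrict (insert x Y)) ∧
      Z ∈ T.sides ∧ Z ≠ Y ∧ Disjoint Y Z ∧
      θ.2.sides = T.sides.image (swapSide Y Z) }

/-- The TBR neighbourhood `N_TBR(T) = {θ(T) : θ ∈ O_TBR(T)}`. -/
def NTBR (T : PhyloTree n) : Set (PhyloTree n) := Prod.snd '' T.OTBR

/-- The SPR neighbourhood. -/
def NSPR (T : PhyloTree n) : Set (PhyloTree n) := Prod.snd '' T.OSPR

/-- The NNI neighbourhood. -/
def NNNI (T : PhyloTree n) : Set (PhyloTree n) := Prod.snd '' T.ONNI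

/-- A caterpillar: every internal vertex (equivalently, every
tripartition of the leaves into three clusters) is adjacent to a
leaf. -/
def IsCaterpillar (T : PhyloTree n) : Prop :=
  ∀ A B C : Finset (Fin n), A ∈ T.sides → B ∈ T.sides → C ∈ T.sides →
    Disjoint A B → Disjoint A C → Disjoint B C → A ∪ B ∪ C = Finset.univ →
    (A.card = 1 ∨ B.card = 1 ∨ C.card = 1)

/-- A complete (maximally balanced) tree. -/
def IsComplete (T : PhyloTree n) : Prop :=
  ∃ k : ℕ, 3 * 2 ^ k ≤ n ∧ n < 3 * 2 ^ (k + 1) ∧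
    (∃ Y ∈ T.sides, Y.card = 2 ^ (k + 1)) ∧
    ∀ Y ∈ T.sides, 2 ≤ Y.card → Y.card ≤ 2 ^ (k + 1) →
      ∃ Y₁ Y₂ : Finset (Fin n), Y₁ ∈ T.sides ∧ Y₂ ∈ T.sides ∧
        Disjoint Y₁ Y₂ ∧ Y₁ ∪ Y₂ = Y ∧
        ∃ j : ℕ, Y₁.card = 2 ^ j ∧ 2 ^ (j - 1) ≤ Y₂.card ∧ Y₂.card < 2 ^ (j + 1)

/-- The pendant subtree on the cluster `S` is perfectly balanced:
every cluster inside `S` with at least two leaves splits into two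
equal-sized child clusters. -/
def PerfOn (T : PhyloTree n) (S : Finset (Fin n)) : Prop :=
  ∀ Y ∈ T.sides, Y ⊆ S → 2 ≤ Y.card →
    ∃ Y₁ Y₂ : Finset (Fin n), Y₁ ∈ T.sides ∧ Y₂ ∈ T.sides ∧
      Disjoint Y₁ Y₂ ∧ Y₁ ∪ Y₂ = Y ∧ Y₁.card = Y₂.card

/-- A perfect tree: either `n = 2^k` and `T` is two perfectly balanced
rooted trees with `2^(k-1)` leaves joined by an edge, or
`n = 3·2^(k-1)` and `T` is three perfectly balanced rooted trees with
`2^(k-1)` leaves attached to a common vertex. -/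
def IsPerfect (T : PhyloTree n) : Prop :=
  (∃ k : ℕ, n = 2 ^ k ∧ ∃ A ∈ T.sides,
      A.card = 2 ^ (k - 1) ∧ T.PerfOn A ∧ T.PerfOn Aᶜ) ∨
  (∃ k : ℕ, n = 3 * 2 ^ (k - 1) ∧ ∃ A B C : Finset (Fin n),
      A ∈ T.sides ∧ B ∈ T.sides ∧ C ∈ T.sides ∧
      Disjoint A B ∧ Disjoint A C ∧ Disjoint B C ∧
      A ∪ B ∪ C = Finset.univ ∧
      A.card = 2 ^ (k - 1) ∧ B.card = 2 ^ (k - 1) ∧ C.card = 2 ^ (k - 1) ∧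
      T.PerfOn A ∧ T.PerfOn B ∧ T.PerfOn C)

end PhyloTree

/-!
If `T` is not a caterpillar, some interior vertex has three clusters `A`, `B`, `C` with at least
two leaves each; take `A` smallest and let `A₁`, `A₂` be its children. The nearest-neighbour
interchange swapping `A₂` and `B` replaces the split `A | B ∪ C` by `A₁ ∪ B | A₂ ∪ C` and keeps
all other splits, so `Γ` grows by `(|B| - |A₂|) * (|C| - |A₁|) > 0`.

Trees are split systems here, so the work is to check that the new system is again maximal
compatible. Every other split of `T` lies inside one of the four subtrees `A₁`, `A₂`, `B`, `C`,
hence is compatible with the new split; and a side crossing `A` that is compatible with the four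
subtrees is a union of one subtree from each end, so it is a new side unless it crosses
`A₁ ∪ B`.
-/

open Finset

theorem two_le_card_union {α : Type*} [DecidableEq α] {Y Z : Finset α} (hY : Y.Nonempty)
    (hZ : Z.Nonempty) (hd : Disjoint Y Z) : 2 ≤ #(Y ∪ Z) := by
  rw [card_union_of_disjoint hd]
  have := hY.card_pos
  have := hZ.card_pos
  omega

theorem sidesCompatible_iff {n : ℕ} {A B : Finset (Fin n)} :
    SidesCompatible A B ↔ A ≤ B ∨ B ≤ A ∨ Disjoint A B ∨ Codisjoint A B := by
  rw [SidesCompatible, codisjoint_iff, sup_eq_union, top_eq_univ]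

namespace SidesCompatible

variable {n : ℕ} {A B S X Y X₁ X₂ : Finset (Fin n)}

theorem refl (A : Finset (Fin n)) : SidesCompatible A A := Or.inl subset_rfl

theorem symm (h : SidesCompatible A B) : SidesCompatible B A := by
  rw [sidesCompatible_iff, disjoint_comm, codisjoint_comm] at *
  tauto

theorem compl_right (h : SidesCompatible A B) : SidesCompatible A Bᶜ := by
  rw [sidesCompatible_iff] at h ⊢
  rw [le_compl_iff_disjoint_right, ← codisjoint_iff_compl_le_left, disjoint_compl_right_iff,
    codisjoint_iff_compl_le_left (y := Bᶜ), compl_compl]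
  tauto

theorem compl_left (h : SidesCompatible A B) : SidesCompatible Aᶜ B :=
  h.symm.compl_right.symm

theorem not_of_mem {a b c d : Fin n} (ha : a ∈ A) (ha' : a ∉ B) (hb : b ∉ A) (hb' : b ∈ B)
    (hc : c ∈ A) (hc' : c ∈ B) (hd : d ∉ A) (hd' : d ∉ B) : ¬ SidesCompatible A B := by
  rintro (h | h | h | h)
  · exact ha' (h ha)
  · exact hb (h hb')
  · exact disjoint_left.1 h hc hc'
  · exact (mem_union.1 (h ▸ mem_univ d)).elim hd hd'

theorem subset_or_subset_of_ssubset_union (h₁ : SidesCompatible S X₁)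
    (h₂ : SidesCompatible S X₂) (hu : X₁ ∪ X₂ ≠ univ)
    (hS : S ⊂ X₁ ∪ X₂) : S ⊆ X₁ ∨ S ⊆ X₂ := by
  have not_codisjoint {X : Finset (Fin n)} (hX : X ⊆ X₁ ∪ X₂) : S ∪ X ≠ univ := fun h' =>
    hu (univ_subset_iff.1 (h' ▸ union_subset hS.subset hX))
  rcases h₁ with h₁ | h₁ | h₁ | h₁
  · exact Or.inl h₁
  · rcases h₂ with h₂ | h₂ | h₂ | h₂
    · exact Or.inr h₂
    · exact absurd (union_subset h₁ h₂) hS.not_subset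
    · exact Or.inl (h₂.left_le_of_le_sup_right hS.subset)
    · exact absurd h₂ (not_codisjoint subset_union_right)
  · exact Or.inr (h₁.left_le_of_le_sup_left hS.subset)
  · exact absurd h₁ (not_codisjoint subset_union_left)

theorem subset_or_disjoint (h : SidesCompatible S X) (hXY : X ⊆ Y)
    (hSY : ¬ SidesCompatible S Y) : X ⊆ S ∨ Disjoint X S := by
  rcases h with h | h | h | h
  · exact absurd (Or.inl (h.trans hXY)) hSY
  · exact Or.inl h
  · exact Or.inr h.symm
  · exact absurd (Or.inr (Or.inr (Or.inr (univ_subset_iff.1 (h ▸ union_subset_union_right hXY)))))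
      hSY

end SidesCompatible

namespace PhyloTree

variable {n : ℕ}

theorem exists_children (T : PhyloTree n) {A : Finset (Fin n)} (hA : A ∈ T.sides)
    (hcard : 2 ≤ #A) : ∃ A₁ ∈ T.sides, ∃ A₂ ∈ T.sides, Disjoint A₁ A₂ ∧ A₁ ∪ A₂ = A := by
  obtain ⟨x, hx⟩ := card_pos.1 (by omega : 0 < #A)
  have hsingleton : {x} ⊂ A :=
    ssubset_of_subset_of_ne (singleton_subset_iff.2 hx) fun h => by
      simp [← h] at hcard
  obtain ⟨A₁, hmax⟩ := exists_maximal (s := {B ∈ T.sides | B ⊂ A})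
    ⟨{x}, mem_filter.2 ⟨T.singleton_mem x, hsingleton⟩⟩
  obtain ⟨hA₁, hA₁A⟩ := mem_filter.1 hmax.prop
  have hAuniv := (T.proper A hA).2
  have inside : ∀ B ∈ T.sides, B ⊆ A → SidesCompatible (A \ A₁) B := by
    intro B hB hBA
    rcases T.compatible A₁ hA₁ B hB with h | h | h | h
    · rcases hBA.eq_or_ssubset with rfl | hlt
      · exact Or.inl sdiff_subset
      · obtain rfl := (hmax.2 (mem_filter.2 ⟨hB, hlt⟩) h).antisymm h
        exact Or.inr (Or.inr (Or.inl sdiff_disjoint))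
    · exact Or.inr (Or.inr (Or.inl (sdiff_disjoint.mono_right h)))
    · exact Or.inr (Or.inl (subset_sdiff.2 ⟨hBA, h.symm⟩))
    · exact absurd (univ_subset_iff.1 (h ▸ union_subset hA₁A.subset hBA)) hAuniv
  refine ⟨A₁, hA₁, A \ A₁, T.maximal _ (sdiff_nonempty.2 hA₁A.not_subset)
    (fun h => hAuniv (univ_subset_iff.1 (h ▸ sdiff_subset))) fun B hB => ?_,
    disjoint_sdiff, union_sdiff_of_subset hA₁A.subset⟩
  rcases T.compatible A hA B hB with h | h | h | h
  · exact Or.inl (sdiff_subset.trans h)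
  · exact inside B hB h
  · exact Or.inr (Or.inr (Or.inl (h.mono_left sdiff_subset)))
  · have hBc : Bᶜ ⊆ A := fun y hy => (mem_union.1 (h ▸ mem_univ y)).resolve_right (mem_compl.1 hy)
    simpa using (inside Bᶜ (T.compl_mem B hB) hBc).compl_right

def splitWeight (A : Finset (Fin n)) : ℕ :=
  if 2 ≤ #A ∧ 2 ≤ #Aᶜ then #A * #Aᶜ else 0

theorem splitWeight_of_two_le {A : Finset (Fin n)} (hA : 2 ≤ #A) (hAc : 2 ≤ #Aᶜ) :
    splitWeight A = #A * #Aᶜ :=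
  if_pos ⟨hA, hAc⟩

theorem gamma_eq_sum_splitWeight (T : PhyloTree n) :
    T.gamma = (∑ A ∈ T.sides, splitWeight A) / 2 := by
  rw [gamma, sum_filter]
  rfl

theorem sum_splitWeight_eq (T : PhyloTree n) {A : Finset (Fin n)} (hA : A ∈ T.sides)
    (hcard : 2 ≤ #A) (hcard' : 2 ≤ #Aᶜ) :
    ∑ S ∈ T.sides, splitWeight S =
      2 * (#A * #Aᶜ) + ∑ S ∈ (T.sides.erase A).erase Aᶜ, splitWeight S := by
  have hne : Aᶜ ≠ A := fun e => (T.proper A hA).2 (by rw [← union_compl A, e, union_self])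
  rw [← add_sum_erase _ _ hA, ← add_sum_erase _ _ (mem_erase.2 ⟨hne, T.compl_mem A hA⟩),
    splitWeight_of_two_le hcard hcard', splitWeight_of_two_le hcard' (by rwa [compl_compl]),
    compl_compl]
  ring

/-- `X₁, X₂ | X₃, X₄` are the four clusters hanging off the interior edge `X₁ ∪ X₂ | X₃ ∪ X₄`
of `T`. -/
structure IsQuartet (T : PhyloTree n) (X₁ X₂ X₃ X₄ : Finset (Fin n)) : Prop where
  mem₁ : X₁ ∈ T.sides
  mem₂ : X₂ ∈ T.sides
  mem₃ : X₃ ∈ T.sides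
  mem₄ : X₄ ∈ T.sides
  mem₁₂ : X₁ ∪ X₂ ∈ T.sides
  disjoint₁₂ : Disjoint X₁ X₂
  disjoint₃₄ : Disjoint X₃ X₄
  compl₁₂ : (X₁ ∪ X₂)ᶜ = X₃ ∪ X₄

namespace IsQuartet

variable {T : PhyloTree n} {X₁ X₂ X₃ X₄ S : Finset (Fin n)}

theorem compl₃₄ (h : IsQuartet T X₁ X₂ X₃ X₄) : (X₃ ∪ X₄)ᶜ = X₁ ∪ X₂ := by
  rw [← h.compl₁₂, compl_compl]

theorem mem₃₄ (h : IsQuartet T X₁ X₂ X₃ X₄) : X₃ ∪ X₄ ∈ T.sides :=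
  h.compl₁₂ ▸ T.compl_mem _ h.mem₁₂

theorem swap (h : IsQuartet T X₁ X₂ X₃ X₄) : IsQuartet T X₂ X₁ X₄ X₃ where
  mem₁ := h.mem₂
  mem₂ := h.mem₁
  mem₃ := h.mem₄
  mem₄ := h.mem₃
  mem₁₂ := union_comm X₁ X₂ ▸ h.mem₁₂
  disjoint₁₂ := h.disjoint₁₂.symm
  disjoint₃₄ := h.disjoint₃₄.symm
  compl₁₂ := by rw [union_comm, h.compl₁₂, union_comm]

theorem flip (h : IsQuartet T X₁ X₂ X₃ X₄) : IsQuartet T X₃ X₄ X₁ X₂ :=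
  ⟨h.mem₃, h.mem₄, h.mem₁, h.mem₂, h.mem₃₄, h.disjoint₃₄, h.disjoint₁₂, h.compl₃₄⟩

theorem disjoint₁₂_₃₄ (h : IsQuartet T X₁ X₂ X₃ X₄) : Disjoint (X₁ ∪ X₂) (X₃ ∪ X₄) :=
  h.compl₁₂ ▸ disjoint_compl_right

theorem disjoint₁₄ (h : IsQuartet T X₁ X₂ X₃ X₄) : Disjoint X₁ X₄ :=
  h.disjoint₁₂_₃₄.mono subset_union_left subset_union_right

theorem disjoint₂₃ (h : IsQuartet T X₁ X₂ X₃ X₄) : Disjoint X₂ X₃ :=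
  h.disjoint₁₂_₃₄.mono subset_union_right subset_union_left

theorem compl_union_diag (h : IsQuartet T X₁ X₂ X₃ X₄) : (X₁ ∪ X₃)ᶜ = X₂ ∪ X₄ := by
  refine IsCompl.compl_eq ⟨?_, ?_⟩
  · exact disjoint_union_left.2 ⟨disjoint_union_right.2 ⟨h.disjoint₁₂, h.disjoint₁₄⟩,
      disjoint_union_right.2 ⟨h.disjoint₂₃.symm, h.disjoint₃₄⟩⟩
  · rw [codisjoint_iff, sup_eq_union, top_eq_univ, union_union_union_comm, ← h.compl₁₂,
      union_compl]

theorem two_le_card₁₂ (h : IsQuartet T X₁ X₂ X₃ X₄) : 2 ≤ #(X₁ ∪ X₂) :=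
  two_le_card_union (T.proper _ h.mem₁).1 (T.proper _ h.mem₂).1 h.disjoint₁₂

theorem two_le_card_union_diag (h : IsQuartet T X₁ X₂ X₃ X₄) : 2 ≤ #(X₁ ∪ X₃) :=
  two_le_card_union (T.proper _ h.mem₁).1 (T.proper _ h.mem₃).1
    (h.disjoint₁₂_₃₄.mono subset_union_left subset_union_left)

theorem union_diag_proper (h : IsQuartet T X₁ X₂ X₃ X₄) :
    (X₁ ∪ X₃).Nonempty ∧ X₁ ∪ X₃ ≠ univ := by
  refine ⟨(T.proper _ h.mem₁).1.mono subset_union_left, fun e => ?_⟩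
  have : X₂ ∪ X₄ = ∅ := by rw [← h.compl_union_diag, e, compl_univ]
  exact ((T.proper _ h.mem₂).1.mono subset_union_left).ne_empty this

theorem not_sidesCompatible_union_diag (h : IsQuartet T X₁ X₂ X₃ X₄) :
    ¬ SidesCompatible (X₁ ∪ X₂) (X₁ ∪ X₃) := by
  obtain ⟨x₁, hx₁⟩ := (T.proper _ h.mem₁).1
  obtain ⟨x₂, hx₂⟩ := (T.proper _ h.mem₂).1
  obtain ⟨x₃, hx₃⟩ := (T.proper _ h.mem₃).1
  obtain ⟨x₄, hx₄⟩ := (T.proper _ h.mem₄).1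
  have not_mem₁₂ {x} (hx : x ∈ X₃ ∪ X₄) : x ∉ X₁ ∪ X₂ := disjoint_right.1 h.disjoint₁₂_₃₄ hx
  have not_mem_diag {x} (hx : x ∈ X₂ ∪ X₄) : x ∉ X₁ ∪ X₃ :=
    mem_compl.1 (h.compl_union_diag ▸ hx)
  exact SidesCompatible.not_of_mem (mem_union_right _ hx₂) (not_mem_diag (mem_union_left _ hx₂))
    (not_mem₁₂ (mem_union_left _ hx₃)) (mem_union_right _ hx₃) (mem_union_left _ hx₁)
    (mem_union_left _ hx₁) (not_mem₁₂ (mem_union_right _ hx₄))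
    (not_mem_diag (mem_union_right _ hx₄))

theorem union_diag_not_mem (h : IsQuartet T X₁ X₂ X₃ X₄) : X₁ ∪ X₃ ∉ T.sides := fun hP =>
  h.not_sidesCompatible_union_diag (T.compatible _ h.mem₁₂ _ hP)

theorem sidesCompatible_union_diag (h : IsQuartet T X₁ X₂ X₃ X₄) (hS : S ∈ T.sides)
    (h₁₂ : S ≠ X₁ ∪ X₂) (h₃₄ : S ≠ X₃ ∪ X₄) : SidesCompatible (X₁ ∪ X₃) S := by
  have of_block : ∀ Y, (Y ⊆ X₁ ∨ Y ⊆ X₂) ∨ (Y ⊆ X₃ ∨ Y ⊆ X₄) →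
      SidesCompatible (X₁ ∪ X₃) Y := by
    rintro Y ((hY | hY) | (hY | hY))
    · exact Or.inr (Or.inl (hY.trans subset_union_left))
    · exact Or.inr (Or.inr (Or.inl (disjoint_union_left.2
        ⟨h.disjoint₁₂.mono_right hY, h.disjoint₂₃.symm.mono_right hY⟩)))
    · exact Or.inr (Or.inl (hY.trans subset_union_right))
    · exact Or.inr (Or.inr (Or.inl (disjoint_union_left.2
        ⟨h.disjoint₁₄.mono_right hY, h.disjoint₃₄.mono_right hY⟩)))
  -- every other edge of `T` lies inside one of the four subtrees
  have of_ssubset : ∀ Y ∈ T.sides, Y ⊂ X₁ ∪ X₂ ∨ Y ⊂ X₃ ∪ X₄ →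
      SidesCompatible (X₁ ∪ X₃) Y := by
    rintro Y hY (hsub | hsub)
    · exact of_block Y (Or.inl (SidesCompatible.subset_or_subset_of_ssubset_union
        (T.compatible Y hY _ h.mem₁) (T.compatible Y hY _ h.mem₂) (T.proper _ h.mem₁₂).2 hsub))
    · exact of_block Y (Or.inr (SidesCompatible.subset_or_subset_of_ssubset_union
        (T.compatible Y hY _ h.mem₃) (T.compatible Y hY _ h.mem₄) (T.proper _ h.mem₃₄).2 hsub))
  have hSc := T.compl_mem S hS
  rcases sidesCompatible_iff.1 (T.compatible _ h.mem₁₂ S hS) with h' | h' | h' | h'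
  · have hsub : Sᶜ ⊂ X₃ ∪ X₄ := h.compl₁₂ ▸ (compl_le_compl h').lt_of_ne
      fun e => h₁₂ (compl_injective e)
    simpa using (of_ssubset Sᶜ hSc (Or.inr hsub)).compl_right
  · exact of_ssubset S hS (Or.inl (h'.lt_of_ne h₁₂))
  · have hsub : S ⊂ X₃ ∪ X₄ := h.compl₁₂ ▸ (le_compl_iff_disjoint_left.2 h').lt_of_ne
      (h.compl₁₂ ▸ h₃₄)
    exact of_ssubset S hS (Or.inr hsub)
  · have hsub : Sᶜ ⊂ X₁ ∪ X₂ := (codisjoint_iff_compl_le_left.1 h').lt_of_ne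
      fun e => h₃₄ (by rw [← compl_compl S, e, h.compl₁₂])
    simpa using (of_ssubset Sᶜ hSc (Or.inl hsub)).compl_right

theorem eq_union_diag_of_subset_of_disjoint (h : IsQuartet T X₁ X₂ X₃ X₄)
    (hcross : ¬ SidesCompatible S (X₁ ∪ X₂)) (h₃ : SidesCompatible S X₃)
    (h₄ : SidesCompatible S X₄) (hdiag : SidesCompatible S (X₁ ∪ X₃)) (hX₁ : X₁ ⊆ S)
    (hX₂ : Disjoint X₂ S) : S = X₁ ∪ X₃ := by
  have hcross' : ¬ SidesCompatible S (X₃ ∪ X₄) := fun h' => hcross (h.compl₃₄ ▸ h'.compl_right)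
  rcases h₃.subset_or_disjoint subset_union_left hcross' with hX₃ | hX₃ <;>
    rcases h₄.subset_or_disjoint subset_union_right hcross' with hX₄ | hX₄
  · exact absurd (Or.inr (Or.inl (union_subset hX₃ hX₄))) hcross'
  · refine subset_antisymm ?_ (union_subset hX₁ hX₃)
    rw [← compl_compl (X₁ ∪ X₃), h.compl_union_diag]
    exact le_compl_iff_disjoint_left.2 (disjoint_union_left.2 ⟨hX₂, hX₄⟩)
  · obtain ⟨x₁, hx₁⟩ := (T.proper _ h.mem₁).1
    obtain ⟨x₂, hx₂⟩ := (T.proper _ h.mem₂).1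
    obtain ⟨x₃, hx₃⟩ := (T.proper _ h.mem₃).1
    obtain ⟨x₄, hx₄⟩ := (T.proper _ h.mem₄).1
    have not_mem_diag {x} (hx : x ∈ X₂ ∪ X₄) : x ∉ X₁ ∪ X₃ :=
      mem_compl.1 (h.compl_union_diag ▸ hx)
    exact absurd hdiag (SidesCompatible.not_of_mem (hX₄ hx₄) (not_mem_diag (mem_union_right _ hx₄))
      (disjoint_left.1 hX₃ hx₃) (mem_union_right _ hx₃) (hX₁ hx₁) (mem_union_left _ hx₁)
      (disjoint_left.1 hX₂ hx₂) (not_mem_diag (mem_union_left _ hx₂)))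
  · exact absurd (Or.inr (Or.inr (Or.inl (disjoint_union_left.2 ⟨hX₃, hX₄⟩).symm))) hcross'

theorem eq_union_diag_of_not_sidesCompatible (h : IsQuartet T X₁ X₂ X₃ X₄)
    (hcross : ¬ SidesCompatible S (X₁ ∪ X₂)) (h₁ : SidesCompatible S X₁)
    (h₂ : SidesCompatible S X₂) (h₃ : SidesCompatible S X₃) (h₄ : SidesCompatible S X₄)
    (hdiag : SidesCompatible S (X₁ ∪ X₃)) : S = X₁ ∪ X₃ ∨ S = X₂ ∪ X₄ := by
  rcases h₁.subset_or_disjoint subset_union_left hcross with hX₁ | hX₁ <;>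
    rcases h₂.subset_or_disjoint subset_union_right hcross with hX₂ | hX₂
  · exact absurd (Or.inr (Or.inl (union_subset hX₁ hX₂))) hcross
  · exact Or.inl (h.eq_union_diag_of_subset_of_disjoint hcross h₃ h₄ hdiag hX₁ hX₂)
  · refine Or.inr (h.swap.eq_union_diag_of_subset_of_disjoint (union_comm X₁ X₂ ▸ hcross) h₄ h₃
      ?_ hX₂ hX₁)
    exact h.compl_union_diag ▸ hdiag.compl_right
  · exact absurd (Or.inr (Or.inr (Or.inl (disjoint_union_left.2 ⟨hX₁, hX₂⟩).symm))) hcross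

end IsQuartet

/-- The sides of the tree obtained from `T` by the nearest-neighbour interchange swapping `X₂` and
`X₃` across the edge `X₁ ∪ X₂ | X₃ ∪ X₄`. -/
def nniSides (T : PhyloTree n) (X₁ X₂ X₃ X₄ : Finset (Fin n)) : Finset (Finset (Fin n)) :=
  insert (X₁ ∪ X₃) (insert (X₂ ∪ X₄) ((T.sides.erase (X₁ ∪ X₂)).erase (X₃ ∪ X₄)))

theorem mem_nniSides {T : PhyloTree n} {X₁ X₂ X₃ X₄ S : Finset (Fin n)} :
    S ∈ T.nniSides X₁ X₂ X₃ X₄ ↔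
      S = X₁ ∪ X₃ ∨ S = X₂ ∪ X₄ ∨ (S ∈ T.sides ∧ S ≠ X₁ ∪ X₂ ∧ S ≠ X₃ ∪ X₄) := by
  simp only [nniSides, mem_insert, mem_erase]
  tauto

theorem nniSides_swap (T : PhyloTree n) (X₁ X₂ X₃ X₄ : Finset (Fin n)) :
    T.nniSides X₂ X₁ X₄ X₃ = T.nniSides X₁ X₂ X₃ X₄ := by
  ext S
  simp only [mem_nniSides, union_comm X₂ X₁, union_comm X₄ X₃]
  tauto

theorem nniSides_flip (T : PhyloTree n) (X₁ X₂ X₃ X₄ : Finset (Fin n)) :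
    T.nniSides X₃ X₄ X₁ X₂ = T.nniSides X₁ X₂ X₃ X₄ := by
  ext S
  simp only [mem_nniSides, union_comm X₃ X₁, union_comm X₄ X₂]
  tauto

namespace IsQuartet

variable {T : PhyloTree n} {X₁ X₂ X₃ X₄ S : Finset (Fin n)}

theorem mem_nniSides₁ (h : IsQuartet T X₁ X₂ X₃ X₄) : X₁ ∈ T.nniSides X₁ X₂ X₃ X₄ := by
  refine mem_nniSides.2 (.inr (.inr ⟨h.mem₁, fun e => ?_, fun e => ?_⟩))
  · have hX₂ : Disjoint X₂ X₂ := h.disjoint₁₂.mono_left (e ▸ subset_union_right)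
    exact (T.proper _ h.mem₂).1.ne_empty (disjoint_self_iff_empty _ |>.1 hX₂)
  · have hX₁ : Disjoint X₁ X₁ := by
      nth_rw 2 [e]
      exact h.disjoint₁₂_₃₄.mono_left subset_union_left
    exact (T.proper _ h.mem₁).1.ne_empty (disjoint_self_iff_empty _ |>.1 hX₁)

theorem sidesCompatible_union_diag_of_mem (h : IsQuartet T X₁ X₂ X₃ X₄)
    (hS : S ∈ T.nniSides X₁ X₂ X₃ X₄) : SidesCompatible (X₁ ∪ X₃) S := by
  rcases mem_nniSides.1 hS with rfl | rfl | ⟨hS, h₁₂, h₃₄⟩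
  · exact .refl _
  · exact h.compl_union_diag ▸ (SidesCompatible.refl _).compl_right
  · exact h.sidesCompatible_union_diag hS h₁₂ h₃₄

theorem sidesCompatible_of_mem_nniSides (h : IsQuartet T X₁ X₂ X₃ X₄)
    (hS : S ∈ T.nniSides X₁ X₂ X₃ X₄) {S' : Finset (Fin n)} (hS' : S' ∈ T.nniSides X₁ X₂ X₃ X₄) :
    SidesCompatible S S' := by
  have hdiag {Y} (hY : Y ∈ T.nniSides X₁ X₂ X₃ X₄) : SidesCompatible Y (X₁ ∪ X₃) :=
    (h.sidesCompatible_union_diag_of_mem hY).symm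
  rcases mem_nniSides.1 hS with rfl | rfl | ⟨hT, -, -⟩
  · exact (hdiag hS').symm
  · exact h.compl_union_diag ▸ (hdiag hS').compl_right.symm
  rcases mem_nniSides.1 hS' with rfl | rfl | ⟨hT', -, -⟩
  · exact hdiag hS
  · exact h.compl_union_diag ▸ (hdiag hS).compl_right
  · exact T.compatible S hT S' hT'

theorem mem_nniSides_of_forall_sidesCompatible (h : IsQuartet T X₁ X₂ X₃ X₄) (hne : S.Nonempty)
    (huniv : S ≠ univ) (hS : ∀ Y ∈ T.nniSides X₁ X₂ X₃ X₄, SidesCompatible S Y) :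
    S ∈ T.nniSides X₁ X₂ X₃ X₄ := by
  have hdiag := hS _ (mem_insert_self _ _)
  by_cases hcross : SidesCompatible S (X₁ ∪ X₂)
  · refine mem_nniSides.2 (.inr (.inr ⟨T.maximal S hne huniv fun Y hY => ?_, ?_, ?_⟩))
    · by_cases h₁₂ : Y = X₁ ∪ X₂
      · exact h₁₂ ▸ hcross
      by_cases h₃₄ : Y = X₃ ∪ X₄
      · exact h₃₄ ▸ h.compl₁₂ ▸ hcross.compl_right
      exact hS Y (mem_nniSides.2 (.inr (.inr ⟨hY, h₁₂, h₃₄⟩)))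
    · rintro rfl
      exact h.not_sidesCompatible_union_diag hdiag
    · rintro rfl
      exact h.not_sidesCompatible_union_diag (h.compl₃₄ ▸ hdiag.compl_left)
  have h₂ : X₂ ∈ T.nniSides X₁ X₂ X₃ X₄ := nniSides_swap T X₁ X₂ X₃ X₄ ▸ h.swap.mem_nniSides₁
  have h₃ : X₃ ∈ T.nniSides X₁ X₂ X₃ X₄ := nniSides_flip T X₁ X₂ X₃ X₄ ▸ h.flip.mem_nniSides₁
  have h₄ : X₄ ∈ T.nniSides X₁ X₂ X₃ X₄ := by
    rw [← nniSides_flip T X₁ X₂ X₃ X₄, ← nniSides_swap T X₃ X₄ X₁ X₂]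
    exact h.flip.swap.mem_nniSides₁
  rcases h.eq_union_diag_of_not_sidesCompatible hcross (hS _ h.mem_nniSides₁) (hS _ h₂)
    (hS _ h₃) (hS _ h₄) hdiag with rfl | rfl
  · exact mem_insert_self _ _
  · exact mem_insert_of_mem (mem_insert_self _ _)

def nni (h : IsQuartet T X₁ X₂ X₃ X₄) : PhyloTree n where
  sides := T.nniSides X₁ X₂ X₃ X₄
  proper S hS := by
    rcases mem_nniSides.1 hS with rfl | rfl | ⟨hS, -, -⟩
    · exact h.union_diag_proper
    · exact h.swap.union_diag_proper
    · exact T.proper S hS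
  compl_mem S hS := by
    rcases mem_nniSides.1 hS with rfl | rfl | ⟨hS, h₁₂, h₃₄⟩
    · rw [h.compl_union_diag]
      exact mem_insert_of_mem (mem_insert_self _ _)
    · rw [h.swap.compl_union_diag]
      exact mem_insert_self _ _
    · refine mem_nniSides.2 (.inr (.inr ⟨T.compl_mem S hS, fun e => h₃₄ ?_, fun e => h₁₂ ?_⟩))
      · rw [← compl_compl S, e, h.compl₁₂]
      · rw [← compl_compl S, e, h.compl₃₄]
  singleton_mem x := by
    refine mem_nniSides.2 (.inr (.inr ⟨T.singleton_mem x, fun e => ?_, fun e => ?_⟩))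
    · simpa [← e] using h.two_le_card₁₂
    · simpa [← e] using h.flip.two_le_card₁₂
  compatible _ hS _ hS' := h.sidesCompatible_of_mem_nniSides hS hS'
  maximal _ hne huniv hS := h.mem_nniSides_of_forall_sidesCompatible hne huniv hS

theorem gamma_nni_add (h : IsQuartet T X₁ X₂ X₃ X₄) :
    h.nni.gamma + #(X₁ ∪ X₂) * #(X₃ ∪ X₄) = T.gamma + #(X₁ ∪ X₃) * #(X₂ ∪ X₄) := by
  set E := (T.sides.erase (X₁ ∪ X₂)).erase (X₃ ∪ X₄)
  have hPQ : X₁ ∪ X₃ ≠ X₂ ∪ X₄ := fun e => h.union_diag_proper.2 (by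
    rw [← union_compl (X₁ ∪ X₃), h.compl_union_diag, ← e, union_self])
  have hE : E ⊆ T.sides := (erase_subset _ _).trans (erase_subset _ _)
  have hsum : ∑ S ∈ h.nni.sides, splitWeight S =
      2 * (#(X₁ ∪ X₃) * #(X₂ ∪ X₄)) + ∑ S ∈ E, splitWeight S := by
    change ∑ S ∈ insert (X₁ ∪ X₃) (insert (X₂ ∪ X₄) E), splitWeight S = _
    rw [sum_insert (by simpa [hPQ] using fun hP => h.union_diag_not_mem (hE hP)),
      sum_insert fun hQ => h.swap.union_diag_not_mem (hE hQ),
      splitWeight_of_two_le h.two_le_card_union_diag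
        (h.compl_union_diag ▸ h.swap.two_le_card_union_diag),
      splitWeight_of_two_le h.swap.two_le_card_union_diag
        (h.swap.compl_union_diag ▸ h.two_le_card_union_diag),
      h.compl_union_diag, h.swap.compl_union_diag]
    ring
  have hsumT : ∑ S ∈ T.sides, splitWeight S =
      2 * (#(X₁ ∪ X₂) * #(X₃ ∪ X₄)) + ∑ S ∈ E, splitWeight S := by
    rw [T.sum_splitWeight_eq h.mem₁₂ h.two_le_card₁₂ (h.compl₁₂ ▸ h.flip.two_le_card₁₂), h.compl₁₂]
  rw [gamma_eq_sum_splitWeight, gamma_eq_sum_splitWeight, hsum, hsumT]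
  omega

end IsQuartet

theorem exists_gamma_lt_of_card_le (T : PhyloTree n) {A B C : Finset (Fin n)} (hA : A ∈ T.sides)
    (hB : B ∈ T.sides) (hC : C ∈ T.sides) (hAB : Disjoint A B) (hAC : Disjoint A C)
    (hBC : Disjoint B C) (hU : A ∪ B ∪ C = univ) (hcard : 2 ≤ #A) (hAB' : #A ≤ #B)
    (hAC' : #A ≤ #C) : ∃ T' : PhyloTree n, T.gamma < T'.gamma := by
  obtain ⟨A₁, hA₁, A₂, hA₂, hd, rfl⟩ := T.exists_children hA hcard
  have h : T.IsQuartet A₁ A₂ B C := ⟨hA₁, hA₂, hB, hC, hA, hd, hBC,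
    IsCompl.compl_eq ⟨disjoint_union_right.2 ⟨hAB, hAC⟩,
      by rw [codisjoint_iff, sup_eq_union, top_eq_univ, ← union_assoc, hU]⟩⟩
  refine ⟨h.nni, ?_⟩
  have hgamma := h.gamma_nni_add
  have hd₁ : Disjoint A₁ B := hAB.mono_left subset_union_left
  have hd₂ : Disjoint A₂ C := hAC.mono_left subset_union_right
  rw [card_union_of_disjoint hd] at hAB' hAC' hgamma
  rw [card_union_of_disjoint hBC, card_union_of_disjoint hd₁, card_union_of_disjoint hd₂] at hgamma
  have := (T.proper _ hA₁).1.card_pos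
  have := (T.proper _ hA₂).1.card_pos
  -- the gain `#(A₁ ∪ B) * #(A₂ ∪ C) - #A * #(B ∪ C)` equals `(#B - #A₂) * (#C - #A₁)`
  nlinarith

theorem exists_gamma_lt (T : PhyloTree n) {A B C : Finset (Fin n)} (hA : A ∈ T.sides)
    (hB : B ∈ T.sides) (hC : C ∈ T.sides) (hAB : Disjoint A B) (hAC : Disjoint A C)
    (hBC : Disjoint B C) (hU : A ∪ B ∪ C = univ) (hA₂ : 2 ≤ #A) (hB₂ : 2 ≤ #B)
    (hC₂ : 2 ≤ #C) : ∃ T' : PhyloTree n, T.gamma < T'.gamma := by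
  by_cases hAmin : #A ≤ #B ∧ #A ≤ #C
  · exact T.exists_gamma_lt_of_card_le hA hB hC hAB hAC hBC hU hA₂ hAmin.1 hAmin.2
  by_cases hBmin : #B ≤ #A ∧ #B ≤ #C
  · exact T.exists_gamma_lt_of_card_le hB hA hC hAB.symm hBC hAC (by rwa [union_comm B])
      hB₂ hBmin.1 hBmin.2
  · exact T.exists_gamma_lt_of_card_le hC hA hB hAC.symm hBC.symm hAB
      (by rwa [union_comm C, union_right_comm]) hC₂ (by omega) (by omega)

end PhyloTree

theorem gamma_maximiser_is_caterpillar_general (n : ℕ)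
    (T : PhyloTree n) (hmax : ∀ T' : PhyloTree n, T'.gamma ≤ T.gamma) :
    T.IsCaterpillar := by
  intro A B C hA hB hC hAB hAC hBC hU
  by_contra! hcard
  have two_le {X} (hX : X ∈ T.sides) (hX₁ : #X ≠ 1) : 2 ≤ #X := by
    have := (T.proper X hX).1.card_pos
    omega
  obtain ⟨T', hT'⟩ := T.exists_gamma_lt hA hB hC hAB hAC hBC hU (two_le hA hcard.1)
    (two_le hB hcard.2.1) (two_le hC hcard.2.2)
  exact (hmax T').not_gt hT'

/-- Lemma 7: if `T ∈ 𝒯_n` (`n ≥ 4`) satisfies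
`Γ(T) ≥ Γ(T')` for all `T' ∈ 𝒯_n`, then `T` is a caterpillar. -/
theorem gamma_maximiser_is_caterpillar (n : ℕ) (hn : 4 ≤ n)
    (T : PhyloTree n) (hmax : ∀ T' : PhyloTree n, T'.gamma ≤ T.gamma) :
    T.IsCaterpillar :=
  gamma_maximiser_is_caterpillar_general n T hmax
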